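/- arXiv:1608.03215 — 9 statements merged into one kernel-verified Lean document; each statement's English description precedes it below -/
import Mathlib

section
/- Let q be a prime power, n a positive integer, m a positive integer dividing q^n − 1, and α ∈ 𝔽_{q^n}^*. Let V and U be distinct k-dimensional 𝔽_q-subspaces of 𝔽_{q^n} whose subspace polynomials have the forms L_V(X) = X^{q^k} + Σ_{j=0}^{t} a_j X^{q^j} with a_t ≠ 0 (t < k) and L_U(X) = X^{q^k} + Σ_{j=0}^{s} b_j X^{q^j} with b_s ≠ 0 (s < k). Then dim_{𝔽_q}(α^m V ∩ α^m U) ≤ k − min(k − t, k − s) = max(t, s), and the subspace distance satisfies d(α^m V, α^m U) ≥ 2·min(k − t, k − s). -/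
open Polynomial

/-- The `m`-quasi cyclic shift of a subspace `V` by `a`: `a • V = {a * v : v ∈ V}`. -/
noncomputable def qshift {K F : Type*} [Field K] [Field F] [Algebra K F]
    (a : F) (V : Submodule K F) : Submodule K F :=
  V.map (LinearMap.mulLeft K a)

/-- The subspace polynomial `L_V(X) = ∏_{v ∈ V} (X - v)` of a subspace `V` of a
finite field. -/
noncomputable def subspacePoly {K F : Type*} [Field K] [Field F] [Algebra K F] [Fintype F]
    (V : Submodule K F) : F[X] :=
  ∏ v ∈ (Set.toFinite (V : Set F)).toFinset, (X - C v)

/-- The subspace distance `d(U,V) = dim U + dim V - 2 dim (U ⊓ V)`. -/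
noncomputable def subspaceDist {K F : Type*} [Field K] [Field F] [Algebra K F]
    (U V : Submodule K F) : ℕ :=
  Module.finrank K U + Module.finrank K V - 2 * Module.finrank K ↥(U ⊓ V)

lemma eval_subspacePoly_eq_zero_iff {K F : Type*} [Field K] [Field F] [Algebra K F] [Fintype F]
    (V : Submodule K F) (x : F) :
    (subspacePoly V).eval x = 0 ↔ x ∈ V := by
  rw [subspacePoly, eval_prod, Finset.prod_eq_zero_iff]
  simp [sub_eq_zero]

theorem dim_inter_shift_le_and_dist_ge_of_subspacePoly_forms_same_dim
    {K F : Type*} [Field K] [Fintype K] [Field F] [Fintype F] [Algebra K F]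
    (q n m k t s : ℕ) (hq : Fintype.card K = q) (hn : 0 < n)
    (hF : Module.finrank K F = n) (hm : 0 < m) (hmdvd : m ∣ q ^ n - 1)
    (α : F) (hα : α ≠ 0)
    (V U : Submodule K F) (hVU : V ≠ U)
    (hVk : Module.finrank K V = k) (hUk : Module.finrank K U = k)
    (a b : ℕ → F) (htk : t < k) (hsk : s < k)
    (hLV : subspacePoly V =
      X ^ q ^ k + ∑ j ∈ Finset.range (t + 1), C (a j) * X ^ q ^ j)
    (hat : a t ≠ 0)
    (hLU : subspacePoly U =
      X ^ q ^ k + ∑ j ∈ Finset.range (s + 1), C (b j) * X ^ q ^ j)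
    (hbs : b s ≠ 0) :
    Module.finrank K ↥(qshift (α ^ m) V ⊓ qshift (α ^ m) U) ≤ k - min (k - t) (k - s) ∧
    k - min (k - t) (k - s) = max t s ∧
    2 * min (k - t) (k - s) ≤ subspaceDist (qshift (α ^ m) V) (qshift (α ^ m) U) := by
  classical
  have hq2 : 2 ≤ q := by rw [← hq]; exact Fintype.one_lt_card
  have hq1 : 1 ≤ q := by omega
  set c : F := α ^ m with hc
  have hcne : c ≠ 0 := pow_ne_zero _ hα
  have hinj : Function.Injective (LinearMap.mulLeft K c) := by
    intro x y h
    simpa using mul_left_cancel₀ hcne (by simpa using h)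
  -- rank preserved under shift
  have hrk : ∀ W : Submodule K F,
      Module.finrank K ↥(qshift c W) = Module.finrank K ↥W :=
    fun W => ((Submodule.equivMapOfInjective _ hinj W).finrank_eq).symm
  have hinf : qshift c V ⊓ qshift c U = qshift c (V ⊓ U) :=
    (Submodule.map_inf _ hinj).symm
  -- key bound : finrank (V ⊓ U) ≤ max t s
  set d := Module.finrank K ↥(V ⊓ U) with hd
  -- the difference polynomial
  set P : F[X] := subspacePoly V - subspacePoly U with hP
  have hPne : P ≠ 0 := by
    rw [hP, sub_ne_zero]
    intro h
    apply hVU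
    ext x
    rw [← eval_subspacePoly_eq_zero_iff V x, ← eval_subspacePoly_eq_zero_iff U x, h]
  have hdegsum : ∀ (u : ℕ) (e : ℕ → F),
      (∑ j ∈ Finset.range (u + 1), C (e j) * X ^ q ^ j).natDegree ≤ q ^ u := by
    intro u e
    apply Polynomial.natDegree_sum_le_of_forall_le
    intro j hj
    refine (natDegree_C_mul_le _ _).trans ?_
    simpa using Nat.pow_le_pow_right hq1 (Nat.lt_succ_iff.mp (Finset.mem_range.mp hj))
  have hPdeg : P.natDegree ≤ q ^ max t s := by
    have : P = (∑ j ∈ Finset.range (t + 1), C (a j) * X ^ q ^ j)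
        - (∑ j ∈ Finset.range (s + 1), C (b j) * X ^ q ^ j) := by
      rw [hP, hLV, hLU]; ring
    rw [this]
    refine (natDegree_sub_le _ _).trans (max_le ?_ ?_)
    · exact (hdegsum t a).trans (Nat.pow_le_pow_right hq1 (le_max_left _ _))
    · exact (hdegsum s b).trans (Nat.pow_le_pow_right hq1 (le_max_right _ _))
  -- all elements of V ⊓ U are roots of P
  set S : Finset F := (Set.toFinite ((V ⊓ U : Submodule K F) : Set F)).toFinset with hS
  have hsub : S ⊆ P.roots.toFinset := by
    intro x hx
    rw [hS, Set.Finite.mem_toFinset] at hx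
    rw [Multiset.mem_toFinset, mem_roots hPne]
    have hxV : x ∈ V := hx.1
    have hxU : x ∈ U := hx.2
    simp only [IsRoot.def, hP, eval_sub,
      (eval_subspacePoly_eq_zero_iff V x).2 hxV,
      (eval_subspacePoly_eq_zero_iff U x).2 hxU, sub_zero]
  have hScard : S.card = q ^ d := by
    rw [hS, Set.Finite.card_toFinset, ← Set.toFinset_card]
    rw [show ((V ⊓ U : Submodule K F) : Set F).toFinset.card
        = Fintype.card ↥(V ⊓ U) from Set.toFinset_card _]
    rw [← hq, hd, Module.card_eq_pow_finrank (K := K) (V := ↥(V ⊓ U))]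
  have hcard_le : q ^ d ≤ q ^ max t s := by
    calc q ^ d = S.card := hScard.symm
      _ ≤ P.roots.toFinset.card := Finset.card_le_card hsub
      _ ≤ Multiset.card P.roots := Multiset.toFinset_card_le _
      _ ≤ P.natDegree := card_roots' P
      _ ≤ q ^ max t s := hPdeg
  have hdle : d ≤ max t s := by
    exact (Nat.pow_le_pow_iff_right hq2).mp hcard_le
  have harith : k - min (k - t) (k - s) = max t s := by omega
  have hdim : Module.finrank K ↥(qshift c V ⊓ qshift c U) = d := by
    rw [hinf, hrk]
  refine ⟨?_, harith, ?_⟩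
  · rw [hdim, harith]; exact hdle
  · rw [subspaceDist, hdim, hrk, hrk, hVk, hUk]
    omega
end

section
/- Let q be a prime power, m a positive integer dividing q^n − 1, and V a k-dimensional 𝔽_q-subspace of 𝔽_{q^n} with subspace polynomial L_V(X) = X^{q^k} + Σ_{j=0}^{i} a_j X^{q^j}. Suppose a_s ≠ 0 for some s ∈ {1, …, i}, and set t := gcd(s, n). If α, β ∈ 𝔽_{q^n}^* satisfy α^m V = β^m V, then (α/β)^m lies in the subfield 𝔽_{q^t} of 𝔽_{q^n}, i.e., ((α/β)^m)^{q^t} = (α/β)^m. -/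
open Polynomial

/-! Put `γ = (α / β) ^ m`. Then `γ V = V`, so `L_V(γ X) = γ ^ |V| L_V(X)`, and comparing
coefficients gives `γ ^ d = γ ^ |V|` for every `d` at which `L_V` has a nonzero coefficient.
Both `d = 1` (the roots of `L_V` are simple and include `0`) and `d = q ^ s` qualify, hence
`γ ^ q ^ s = γ`. Since also `γ ^ q ^ n = γ`, and the periods of a periodic point of the Frobenius
`x ↦ x ^ q` are closed under `gcd`, `γ ^ q ^ gcd(s, n) = γ`. -/

theorem pow_pow_gcd_eq_self {M : Type*} [Monoid M] {x : M} {q a b : ℕ}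
    (ha : x ^ q ^ a = x) (hb : x ^ q ^ b = x) : x ^ q ^ Nat.gcd a b = x := by
  have key : ∀ c, Function.IsPeriodicPt (· ^ q) c x ↔ x ^ q ^ c = x := fun c => by
    rw [Function.IsPeriodicPt, Function.IsFixedPt, pow_iterate]
  exact (key _).1 (((key a).2 ha).gcd ((key b).2 hb))

theorem coeff_X_pow_pow_add_sum_C_mul_X_pow_pow {R : Type*} [Semiring R] {q k i s : ℕ}
    (hq : 1 < q) (hik : i < k) (hsi : s ≤ i) (a : ℕ → R) :
    (X ^ q ^ k + ∑ j ∈ Finset.range (i + 1), C (a j) * X ^ q ^ j).coeff (q ^ s) = a s := by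
  have hinj := Nat.pow_right_injective hq
  rw [coeff_add, coeff_X_pow, if_neg (hinj.ne (by omega)), zero_add, finsetSum_coeff]
  simp_rw [coeff_C_mul_X_pow, hinj.eq_iff]
  rw [Finset.sum_ite_eq, if_pos (Finset.mem_range.2 (by omega))]

section ProdXSubC

variable {F : Type*} [Field F]

theorem prod_X_sub_C_comp_C_mul_X {S : Finset F} {γ : F} (hγ : γ ≠ 0)
    (hS : ∀ v, v ∈ S ↔ γ * v ∈ S) :
    (∏ v ∈ S, (X - C v)).comp (C γ * X) = C (γ ^ S.card) * ∏ v ∈ S, (X - C v) :=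
  calc (∏ v ∈ S, (X - C v)).comp (C γ * X)
      = ∏ v ∈ S, (C γ * X - C v) := by simp [prod_comp]
    _ = ∏ v ∈ S, (C γ * X - C (γ * v)) :=
        (Finset.prod_equiv (Equiv.mulLeft₀ γ hγ) hS fun _ _ => rfl).symm
    _ = C (γ ^ S.card) * ∏ v ∈ S, (X - C v) := by
        simp_rw [C_mul, ← mul_sub]
        rw [Finset.prod_mul_distrib, Finset.prod_const, C_pow]

theorem coeff_one_prod_X_sub_C_ne_zero {S : Finset F} (h0 : 0 ∈ S) :
    (∏ v ∈ S, (X - C v)).coeff 1 ≠ 0 := by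
  classical
  rw [← Finset.mul_prod_erase S _ h0, C_0, sub_zero, coeff_X_mul, coeff_zero_eq_eval_zero,
    eval_prod]
  simpa [Finset.prod_ne_zero_iff] using fun v hv _ => hv

theorem pow_eq_self_of_coeff_prod_X_sub_C_ne_zero {S : Finset F} (h0 : 0 ∈ S) {γ : F}
    (hγ : γ ≠ 0) (hS : ∀ v, v ∈ S ↔ γ * v ∈ S) {d : ℕ} (hd : (∏ v ∈ S, (X - C v)).coeff d ≠ 0) :
    γ ^ d = γ := by
  have hcoeff : ∀ e, (∏ v ∈ S, (X - C v)).coeff e ≠ 0 → γ ^ e = γ ^ S.card := fun e he => by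
    have := congrArg (coeff · e) (prod_X_sub_C_comp_C_mul_X hγ hS)
    simp only [comp_C_mul_X_coeff, coeff_C_mul] at this
    exact mul_left_cancel₀ he (by rw [this, mul_comm])
  rw [hcoeff d hd, ← hcoeff 1 (coeff_one_prod_X_sub_C_ne_zero h0), pow_one]

end ProdXSubC

section Qshift

variable {K F : Type*} [Field K] [Field F] [Algebra K F]

theorem qshift_mul (a b : F) (V : Submodule K F) : qshift (a * b) V = qshift a (qshift b V) := by
  rw [qshift, qshift, qshift, LinearMap.mulLeft_mul, Submodule.map_comp]

theorem qshift_one (V : Submodule K F) : qshift 1 V = V := by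
  rw [qshift, LinearMap.mulLeft_one, Submodule.map_id]

theorem qshift_div_eq_self {a b : F} (hb : b ≠ 0) {V : Submodule K F}
    (h : qshift a V = qshift b V) : qshift (a / b) V = V := by
  rw [div_eq_inv_mul, qshift_mul, h, ← qshift_mul, inv_mul_cancel₀ hb, qshift_one]

theorem pow_eq_self_of_coeff_subspacePoly_ne_zero [Fintype F] {V : Submodule K F} {γ : F}
    (hγ : γ ≠ 0) (hV : qshift γ V = V) {d : ℕ} (hd : (subspacePoly V).coeff d ≠ 0) :
    γ ^ d = γ := by
  refine pow_eq_self_of_coeff_prod_X_sub_C_ne_zero (by simp) hγ (fun v => ?_) hd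
  simp only [Set.Finite.mem_toFinset, SetLike.mem_coe]
  conv_rhs => rw [← hV, qshift, Submodule.mem_map]
  exact ⟨fun hv => ⟨v, hv, rfl⟩, fun ⟨w, hw, hwv⟩ => mul_left_cancel₀ hγ hwv ▸ hw⟩

end Qshift

theorem quasi_shift_eq_implies_ratio_in_subfield_general
    {K F : Type*} [Field K] [Fintype K] [Field F] [Fintype F] [Algebra K F]
    (q n m k i s : ℕ) (hq : Fintype.card K = q)
    (hF : Module.finrank K F = n)
    (V : Submodule K F) (hik : i < k)
    (a : ℕ → F)
    (hLV : subspacePoly V =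
      X ^ q ^ k + ∑ j ∈ Finset.range (i + 1), C (a j) * X ^ q ^ j)
    (hsi : s ≤ i) (has : a s ≠ 0)
    (α β : F) (hα : α ≠ 0) (hβ : β ≠ 0)
    (heq : qshift (α ^ m) V = qshift (β ^ m) V) :
    ((α / β) ^ m) ^ q ^ Nat.gcd s n = (α / β) ^ m := by
  have hq1 : 1 < q := hq ▸ Fintype.one_lt_card
  have hstab : qshift ((α / β) ^ m) V = V := by
    rw [div_pow]
    exact qshift_div_eq_self (pow_ne_zero m hβ) heq
  have hcoeff : (subspacePoly V).coeff (q ^ s) = a s := by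
    rw [hLV, coeff_X_pow_pow_add_sum_C_mul_X_pow_pow hq1 hik hsi]
  have hs : ((α / β) ^ m) ^ q ^ s = (α / β) ^ m :=
    pow_eq_self_of_coeff_subspacePoly_ne_zero (pow_ne_zero m (div_ne_zero hα hβ)) hstab
      (hcoeff ▸ has)
  have hn : ((α / β) ^ m) ^ q ^ n = (α / β) ^ m := by
    rw [← hq, ← hF, ← Module.card_eq_pow_finrank]
    exact FiniteField.pow_card _
  exact pow_pow_gcd_eq_self hs hn

theorem quasi_shift_eq_implies_ratio_in_subfield
    {K F : Type*} [Field K] [Fintype K] [Field F] [Fintype F] [Algebra K F]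
    (q n m k i s : ℕ) (hq : Fintype.card K = q) (hn : 0 < n)
    (hF : Module.finrank K F = n) (hm : 0 < m) (hmdvd : m ∣ q ^ n - 1)
    (V : Submodule K F) (hVk : Module.finrank K ↥V = k) (hik : i < k)
    (a : ℕ → F)
    (hLV : subspacePoly V =
      X ^ q ^ k + ∑ j ∈ Finset.range (i + 1), C (a j) * X ^ q ^ j)
    (hs1 : 1 ≤ s) (hsi : s ≤ i) (has : a s ≠ 0)
    (α β : F) (hα : α ≠ 0) (hβ : β ≠ 0)
    (heq : qshift (α ^ m) V = qshift (β ^ m) V) :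
    ((α / β) ^ m) ^ q ^ Nat.gcd s n = (α / β) ^ m :=
  quasi_shift_eq_implies_ratio_in_subfield_general q n m k i s hq hF V hik a hLV hsi has α β hα hβ
    heq
end

section
/- Let q be a prime power, m a positive integer dividing q^n − 1, and V a k-dimensional 𝔽_q-subspace of 𝔽_{q^n} whose subspace polynomial is the trinomial L_V(X) = X^{q^k} + a_s X^{q^s} + a_0 X with a_s ≠ 0 and 1 ≤ s < k. If there exist α ∈ 𝔽_{q^n}^* and i ∈ {0, 1, …, n−1} such that σ_i(V) = α^m V, then a_0^{(q^k − q^s)(q^i − 1)} = a_s^{(q^k − 1)(q^i − 1)} (this is the paper's identity (a_0^{(q^k−q^s)/(q^s−1)} / a_s^{(q^k−1)/(q^s−1)})^{q^i−1} = 1 with the exponents cleared of the denominator q^s − 1). -/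
/-!
Write `β = α ^ m`. Applying `σ_i` to the coefficients of `L_V` gives `L_{σ_i(V)} = L_{βV}`, and
`L_{βV}(βX) = β^{q^k} L_V(X)`. Both sides are trinomials in `X, X^{q^s}, X^{q^k}`, so comparing the
coefficients of `X` and `X^{q^s}` gives `a_0^{q^i-1} = β^{q^k-1}` and `a_s^{q^i-1} = β^{q^k-q^s}`;
eliminating `β` yields the identity. The division by `a_0` is legitimate because `a_0` is, up to
sign, the product of the nonzero elements of `V`.
-/

open Polynomial

namespace Polynomial

section Trinomial

variable {R : Type*} [CommRing R] {k m n : ℕ} {u v w : R}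

theorem trinomial_map {S : Type*} [CommRing S] (f : R →+* S) :
    (trinomial k m n u v w).map f = trinomial k m n (f u) (f v) (f w) := by
  simp only [trinomial_def, Polynomial.map_add, Polynomial.map_mul, Polynomial.map_pow, map_C,
    map_X]

theorem trinomial_comp_C_mul_X (c : R) :
    (trinomial k m n u v w).comp (C c * X) =
      trinomial k m n (u * c ^ k) (v * c ^ m) (w * c ^ n) := by
  simp only [trinomial_def, add_comp, mul_comp, pow_comp, C_comp, X_comp, mul_pow, C_mul, C_pow]
  ring

theorem C_mul_trinomial (c : R) :
    C c * trinomial k m n u v w = trinomial k m n (c * u) (c * v) (c * w) := by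
  simp only [trinomial_def, C_mul]
  ring

theorem trinomial_inj {u' v' w' : R} (hkm : k < m) (hmn : m < n) :
    trinomial k m n u v w = trinomial k m n u' v' w' ↔ u = u' ∧ v = v' ∧ w = w' := by
  refine ⟨fun h => ⟨?_, ?_, ?_⟩, by rintro ⟨rfl, rfl, rfl⟩; rfl⟩
  · simpa only [trinomial_trailing_coeff' hkm hmn] using congr_arg (coeff · k) h
  · simpa only [trinomial_middle_coeff hkm hmn] using congr_arg (coeff · m) h
  · simpa only [trinomial_leading_coeff' hkm hmn] using congr_arg (coeff · n) h

end Trinomial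

theorem prod_X_sub_C_map {R S : Type*} [CommRing R] [CommRing S] [DecidableEq S] {f : R →+* S}
    (hf : Function.Injective f) (T : Finset R) :
    (∏ v ∈ T, (X - C v)).map f = ∏ v ∈ T.image f, (X - C v) := by
  rw [Finset.prod_image fun x _ y _ h => hf h, Polynomial.map_prod]
  simp only [Polynomial.map_sub, map_X, map_C]

theorem prod_X_sub_C_image_mul_comp {R : Type*} [CommRing R] [IsDomain R] [DecidableEq R]
    {c : R} (hc : c ≠ 0) (T : Finset R) :
    (∏ v ∈ T.image (c * ·), (X - C v)).comp (C c * X) = C (c ^ T.card) * ∏ v ∈ T, (X - C v) := by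
  rw [Finset.prod_image fun x _ y _ h => mul_left_cancel₀ hc h, prod_comp, C_pow,
    ← Finset.prod_const, ← Finset.prod_mul_distrib]
  refine Finset.prod_congr rfl fun v _ => ?_
  rw [sub_comp, X_comp, C_comp, C_mul, mul_sub]

end Polynomial

section SubspacePoly

variable {K F : Type*} [Field K] [Field F] [Algebra K F] [Fintype F]

theorem subspacePoly_map_of_image_eq (σ : F →+* F) {V W : Submodule K F}
    (h : σ '' V = W) : (subspacePoly V).map σ = subspacePoly W := by
  classical
  rw [subspacePoly, prod_X_sub_C_map σ.injective, subspacePoly]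
  congr 1
  apply Finset.coe_injective
  simp [h]

theorem subspacePoly_qshift_comp {c : F} (hc : c ≠ 0) (V : Submodule K F) :
    (subspacePoly (qshift c V)).comp (C c * X) = C (c ^ Nat.card V) * subspacePoly V := by
  classical
  have : (Set.toFinite (qshift c V : Set F)).toFinset =
      (Set.toFinite (V : Set F)).toFinset.image (c * ·) := by
    apply Finset.coe_injective
    simp only [Set.Finite.coe_toFinset, Finset.coe_image, qshift, Submodule.map_coe]
    rfl
  rw [subspacePoly, this, prod_X_sub_C_image_mul_comp hc, subspacePoly,
    ← Set.ncard_eq_toFinset_card, ← Nat.card_coe_set_eq]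
  rfl

theorem subspacePoly_coeff_one_ne_zero (V : Submodule K F) : (subspacePoly V).coeff 1 ≠ 0 := by
  classical
  set T := (Set.toFinite (V : Set F)).toFinset
  have h0 : (0 : F) ∈ T := by simp [T]
  rw [subspacePoly, ← Finset.mul_prod_erase T _ h0, map_zero, sub_zero, coeff_X_mul,
    coeff_zero_eq_eval_zero, eval_prod, Finset.prod_ne_zero_iff]
  intro v hv
  simpa [sub_eq_zero, eq_comm] using (Finset.mem_erase.mp hv).1

end SubspacePoly

theorem pow_sub_one_eq_pow_sub_of_pow_mul_eq {M : Type*} [CommMonoidWithZero M]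
    [IsCancelMulZero M] {x y : M} {e c d : ℕ} (hx : x ≠ 0) (hy : y ≠ 0) (he : 1 ≤ e) (hcd : c ≤ d)
    (h : x ^ e * y ^ c = y ^ d * x) : x ^ (e - 1) = y ^ (d - c) := by
  apply mul_right_cancel₀ (mul_ne_zero hx (pow_ne_zero c hy))
  rw [← mul_assoc, ← pow_succ, Nat.sub_add_cancel he, h, mul_comm x, ← mul_assoc, ← pow_add,
    Nat.sub_add_cancel hcd]

theorem FiniteField.frobeniusAlgHom_pow_apply {K F : Type*} [Field K] [Fintype K] [CommRing F]
    [Algebra K F] (i : ℕ) (x : F) :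
    (FiniteField.frobeniusAlgHom K F ^ i) x = x ^ Fintype.card K ^ i := by
  rw [AlgHom.coe_pow, FiniteField.coe_frobeniusAlgHom, pow_iterate]

theorem frobenius_eq_quasi_shift_coeff_identity_general
    {K F : Type*} [Field K] [Fintype K] [Field F] [Fintype F] [Algebra K F]
    (q m k s i : ℕ) (hq : Fintype.card K = q)
    (V : Submodule K F) (hVk : Module.finrank K ↥V = k)
    (a0 as : F) (has : as ≠ 0) (hs1 : 1 ≤ s) (hsk : s < k)
    (hLV : subspacePoly V = X ^ q ^ k + C as * X ^ q ^ s + C a0 * X)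
    (α : F) (hα : α ≠ 0)
    (hshift : (fun x => x ^ q ^ i) '' (V : Set F) = ↑(qshift (α ^ m) V)) :
    a0 ^ ((q ^ k - q ^ s) * (q ^ i - 1)) = as ^ ((q ^ k - 1) * (q ^ i - 1)) := by
  set β := α ^ m
  have hβ : β ≠ 0 := pow_ne_zero m hα
  have hq1 : 1 < q := hq ▸ Fintype.one_lt_card
  have hqs : 1 < q ^ s := Nat.one_lt_pow (by omega) hq1
  have hqsk : q ^ s < q ^ k := Nat.pow_lt_pow_right hq1 hsk
  have hL : subspacePoly V = trinomial 1 (q ^ s) (q ^ k) a0 as 1 := by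
    rw [hLV, trinomial_def, C_1, one_mul, pow_one]
    ring
  set σ : F →+* F := (FiniteField.frobeniusAlgHom K F ^ i).toRingHom
  have hσ : ∀ x, σ x = x ^ q ^ i := fun x => hq ▸ FiniteField.frobeniusAlgHom_pow_apply i x
  have hcard : Nat.card V = q ^ k := by
    rw [Module.natCard_eq_pow_finrank (K := K), Nat.card_eq_fintype_card, hq, hVk]
  have hσV : σ '' V = qshift β V := by rwa [show ⇑σ = fun x => x ^ q ^ i from funext hσ]
  have key : ((subspacePoly V).map σ).comp (C β * X) = C (β ^ q ^ k) * subspacePoly V := by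
    rw [subspacePoly_map_of_image_eq σ hσV, subspacePoly_qshift_comp hβ, hcard]
  rw [hL, trinomial_map, trinomial_comp_C_mul_X, C_mul_trinomial, trinomial_inj hqs hqsk, hσ,
    hσ] at key
  obtain ⟨h0, hs, -⟩ := key
  have ha0 : a0 ≠ 0 := by
    simpa only [hL, trinomial_trailing_coeff' hqs hqsk] using subspacePoly_coeff_one_ne_zero V
  have e0 : a0 ^ (q ^ i - 1) = β ^ (q ^ k - 1) :=
    pow_sub_one_eq_pow_sub_of_pow_mul_eq ha0 hβ (Nat.one_le_pow _ _ (by omega))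
      (hqs.trans hqsk).le (by simpa only [pow_one] using h0)
  have es : as ^ (q ^ i - 1) = β ^ (q ^ k - q ^ s) :=
    pow_sub_one_eq_pow_sub_of_pow_mul_eq has hβ (Nat.one_le_pow _ _ (by omega)) hqsk.le hs
  calc a0 ^ ((q ^ k - q ^ s) * (q ^ i - 1))
      = (β ^ (q ^ k - 1)) ^ (q ^ k - q ^ s) := by rw [mul_comm, pow_mul, e0]
    _ = (β ^ (q ^ k - q ^ s)) ^ (q ^ k - 1) := pow_right_comm _ _ _
    _ = as ^ ((q ^ k - 1) * (q ^ i - 1)) := by rw [← es, ← pow_mul, mul_comm]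

theorem frobenius_eq_quasi_shift_coeff_identity
    {K F : Type*} [Field K] [Fintype K] [Field F] [Fintype F] [Algebra K F]
    (q n m k s i : ℕ) (hq : Fintype.card K = q) (hn : 0 < n)
    (hF : Module.finrank K F = n) (hm : 0 < m) (hmdvd : m ∣ q ^ n - 1)
    (V : Submodule K F) (hVk : Module.finrank K ↥V = k)
    (a0 as : F) (has : as ≠ 0) (hs1 : 1 ≤ s) (hsk : s < k)
    (hLV : subspacePoly V = X ^ q ^ k + C as * X ^ q ^ s + C a0 * X)
    (α : F) (hα : α ≠ 0) (hin : i < n)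
    (hshift : (fun x => x ^ q ^ i) '' (V : Set F) = ↑(qshift (α ^ m) V)) :
    a0 ^ ((q ^ k - q ^ s) * (q ^ i - 1)) = as ^ ((q ^ k - 1) * (q ^ i - 1)) :=
  frobenius_eq_quasi_shift_coeff_identity_general q m k s i hq V hVk a0 as has hs1 hsk hLV α hα
    hshift
end

section
/- Let q be a prime power, m a positive integer dividing q^n − 1, and V a k-dimensional 𝔽_q-subspace of 𝔽_{q^n} whose subspace polynomial is the trinomial L_V(X) = X^{q^k} + a_s X^{q^s} + a_0 X with a_s ≠ 0 and 1 ≤ s < k. If α ∈ 𝔽_{q^n}^* and i ∈ {0, 1, …, n−1} satisfy σ_i(V) = α^m V, then α^{m(q^k − q^s)} = a_s^{q^i − 1} and α^{m(q^k − 1)} = a_0^{q^i − 1}. -/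
open Polynomial

theorem frobenius_eq_quasi_shift_coeff_equations
    {K F : Type*} [Field K] [Fintype K] [Field F] [Fintype F] [Algebra K F]
    (q n m k s i : ℕ) (hq : Fintype.card K = q) (hn : 0 < n)
    (hF : Module.finrank K F = n) (hm : 0 < m) (hmdvd : m ∣ q ^ n - 1)
    (V : Submodule K F) (hVk : Module.finrank K ↥V = k)
    (a0 as : F) (has : as ≠ 0) (hs1 : 1 ≤ s) (hsk : s < k)
    (hLV : subspacePoly V = X ^ q ^ k + C as * X ^ q ^ s + C a0 * X)
    (α : F) (hα : α ≠ 0) (hin : i < n)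
    (hshift : (fun x => x ^ q ^ i) '' (V : Set F) = ↑(qshift (α ^ m) V)) :
    α ^ (m * (q ^ k - q ^ s)) = as ^ (q ^ i - 1) ∧
    α ^ (m * (q ^ k - 1)) = a0 ^ (q ^ i - 1) := by
  classical
  rw [subspacePoly] at hLV
  rw [qshift] at hshift
  set p := ringChar K with hpdef
  obtain ⟨t, hp, hqpt⟩ := FiniteField.card K p
  rw [hq] at hqpt
  haveI : CharP F p := charP_of_injective_algebraMap (algebraMap K F).injective p
  haveI : ExpChar F p := ExpChar.prime hp
  have hq2 : 2 ≤ q := by rw [← hq]; exact Fintype.one_lt_card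
  -- basic numeric facts
  have hks : q ^ s < q ^ k := Nat.pow_lt_pow_right (by omega) hsk
  have h1s : 1 < q ^ s := Nat.one_lt_pow (by omega) (by omega)
  have h1k : 1 < q ^ k := Nat.one_lt_pow (by omega) (by omega)
  have h1i : 1 ≤ q ^ i := Nat.one_le_pow _ _ (by omega)
  have hsk' : q ^ s ≤ q ^ k := hks.le
  have h1k' : 1 ≤ q ^ k := h1k.le
  -- the Frobenius map
  set ψ : F →+* F := iterateFrobenius F p ((t : ℕ) * i) with hψdef
  have hψ : ∀ x : F, ψ x = x ^ q ^ i := by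
    intro x
    rw [hψdef, iterateFrobenius_def, hqpt, ← pow_mul]
  set β : F := α ^ m with hβdef
  have hβ : β ≠ 0 := pow_ne_zero _ hα
  set S : Finset F := (Set.toFinite ((V : Submodule K F) : Set F)).toFinset with hSdef
  have hScoe : (S : Set F) = (V : Set F) := Set.Finite.coe_toFinset _
  have hScard : S.card = q ^ k := by
    rw [hSdef, Set.Finite.card_toFinset]
    have : Fintype.card ((V : Submodule K F) : Set F) = Fintype.card ↥V := rfl
    rw [this, Module.card_eq_pow_finrank (K := K), hVk, hq]
  -- image finsets are equal
  have himg : S.image (fun x => ψ x) = S.image (fun x => β * x) := by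
    apply Finset.coe_injective
    rw [Finset.coe_image, Finset.coe_image, hScoe]
    have h1 : (fun x : F => ψ x) '' (V : Set F) = (fun x : F => x ^ q ^ i) '' (V : Set F) := by
      simp only [hψ]
    rw [h1, hshift, Submodule.map_coe]
    rfl
  -- key polynomial identity
  have hmapprod : Polynomial.map ψ (∏ v ∈ S, (X - C v)) = ∏ v ∈ S, (X - C (β * v)) := by
    rw [Polynomial.map_prod]
    simp only [Polynomial.map_sub, map_X, map_C]
    rw [← Finset.prod_image (g := fun x : F => ψ x) (f := fun w : F => X - C w)
        (fun x _ y _ h => ψ.injective h), himg,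
      Finset.prod_image (fun x _ y _ h => mul_left_cancel₀ hβ h)]
  have hcomp : ∏ v ∈ S, (X - C (β * v))
      = C (β ^ q ^ k) * (∏ v ∈ S, (X - C v)).comp (C β⁻¹ * X) := by
    rw [Polynomial.prod_comp, ← hScard, C_pow, ← Finset.prod_const, ← Finset.prod_mul_distrib]
    refine Finset.prod_congr rfl fun v _ => ?_
    rw [sub_comp, X_comp, C_comp, mul_sub, ← mul_assoc, ← C_mul, mul_inv_cancel₀ hβ, C_1,
      one_mul, ← C_mul]
  -- expand the right-hand side
  have e1 : β ^ q ^ k * β⁻¹ ^ q ^ k = 1 := by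
    rw [← mul_pow, mul_inv_cancel₀ hβ, one_pow]
  have e2 : β ^ q ^ k * as * β⁻¹ ^ q ^ s = as * β ^ (q ^ k - q ^ s) := by
    rw [pow_sub₀ _ hβ hsk', inv_pow]; ring
  have e3 : β ^ q ^ k * a0 * β⁻¹ = a0 * β ^ (q ^ k - 1) := by
    rw [pow_sub₀ _ hβ h1k', pow_one]; ring
  have h2 : C (β ^ q ^ k) * ((X ^ q ^ k + C as * X ^ q ^ s + C a0 * X : F[X])).comp (C β⁻¹ * X)
      = X ^ q ^ k + C (as * β ^ (q ^ k - q ^ s)) * X ^ q ^ s + C (a0 * β ^ (q ^ k - 1)) * X := by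
    conv_lhs => simp only [add_comp, mul_comp, pow_comp, X_comp, C_comp, mul_pow, ← C_pow,
      mul_add, ← mul_assoc, ← C_mul]
    rw [e1, e2, e3, C_1, one_mul]
  have hmaptri : Polynomial.map ψ (X ^ q ^ k + C as * X ^ q ^ s + C a0 * X : F[X])
      = X ^ q ^ k + C (ψ as) * X ^ q ^ s + C (ψ a0) * X := by
    simp only [Polynomial.map_add, Polynomial.map_mul, Polynomial.map_pow, map_X, map_C]
  have key : (X ^ q ^ k + C (ψ as) * X ^ q ^ s + C (ψ a0) * X : F[X])
      = X ^ q ^ k + C (as * β ^ (q ^ k - q ^ s)) * X ^ q ^ s + C (a0 * β ^ (q ^ k - 1)) * X := by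
    rw [← hmaptri, ← h2, ← hLV, hmapprod, hcomp, hLV]
  -- extract coefficients
  have hcs : ψ as = as * β ^ (q ^ k - q ^ s) := by
    have h := congrArg (fun P : F[X] => P.coeff (q ^ s)) key
    simp only [coeff_add, coeff_C_mul, coeff_X_pow, coeff_X, hks.ne, h1s.ne, if_false, if_true,
      eq_self_iff_true, mul_one, mul_zero, add_zero, zero_add] at h
    exact h
  have hc0 : ψ a0 = a0 * β ^ (q ^ k - 1) := by
    have h := congrArg (fun P : F[X] => P.coeff 1) key
    simp only [coeff_add, coeff_C_mul, coeff_X_pow, coeff_X, h1k.ne, h1s.ne, if_false, if_true,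
      eq_self_iff_true, mul_one, mul_zero, add_zero, zero_add] at h
    exact h
  -- a0 is nonzero, by separability
  have hsep : (∏ v ∈ S, (X - C v)).Separable :=
    separable_prod_X_sub_C_iff'.2 (fun x _ y _ h => h)
  rw [hLV] at hsep
  have hqF : (q : F) = 0 := by
    rw [hqpt, Nat.cast_pow, show ((p : F) = 0) from CharP.cast_eq_zero F p,
      zero_pow (by exact_mod_cast t.pos.ne')]
  have hcast : ∀ e : ℕ, 1 ≤ e → ((q ^ e : ℕ) : F) = 0 := by
    intro e he
    rw [Nat.cast_pow, hqF, zero_pow (by omega)]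
  have hderiv : derivative (X ^ q ^ k + C as * X ^ q ^ s + C a0 * X : F[X]) = C a0 := by
    simp only [derivative_add, derivative_C_mul, derivative_X_pow, derivative_X,
      hcast k (by omega), hcast s (by omega), C_0, zero_mul, mul_zero, add_zero, zero_add,
      mul_one]
  have ha0 : a0 ≠ 0 := by
    intro h0
    have h2 : IsCoprime (X ^ q ^ k + C as * X ^ q ^ s + C a0 * X : F[X])
        (derivative (X ^ q ^ k + C as * X ^ q ^ s + C a0 * X : F[X])) := hsep
    rw [hderiv, h0, C_0] at h2
    have hu := isCoprime_zero_right.mp h2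
    have hdeg := Polynomial.natDegree_eq_zero_of_isUnit hu
    have hle : q ^ k ≤ (X ^ q ^ k + C as * X ^ q ^ s + 0 * X : F[X]).natDegree := by
      apply le_natDegree_of_ne_zero
      simp [coeff_X_pow, hks.ne']
    omega
  -- conclude
  constructor
  · have h := hcs
    rw [hψ] at h
    rw [pow_mul, pow_sub₀ _ has h1i, pow_one, h, mul_comm as, mul_assoc,
      mul_inv_cancel₀ has, mul_one]
  · have h := hc0
    rw [hψ] at h
    rw [pow_mul, pow_sub₀ _ ha0 h1i, pow_one, h, mul_comm a0, mul_assoc,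
      mul_inv_cancel₀ ha0, mul_one]
end

section
/- Let q be a prime power and let k, s, n be positive integers with s < k. If q^k − 1 divides n and the polynomial X^{q^k − 1} + X^{q^s − 1} + 1 is irreducible over 𝔽_q, then X^{q^k} + X^{q^s} + X is a subspace polynomial with respect to 𝔽_{q^n}: there exists a k-dimensional 𝔽_q-subspace V of 𝔽_{q^n} such that ∏_{v∈V}(X − v) = X^{q^k} + X^{q^s} + X. -/
open Polynomial

/-!
Let `g = X^(q^k-1) + X^(q^s-1) + 1`. Being irreducible of degree `q^k - 1 ∣ n`, `g` divides
`X^(q^n) - X`, and since `g(0) ≠ 0` so does `X g = X^(q^k) + X^(q^s) + X`. Hence this trinomial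
splits over `𝔽_(q^n)` with `q^k` distinct roots. Because `x ↦ x^(q^k) + x^(q^s) + x` is
`𝔽_q`-linear (a sum of powers of the Frobenius), its roots form an `𝔽_q`-subspace, which then has
`q^k` elements, i.e. dimension `k`.
-/

section Trinomial

variable {R : Type*} [Semiring R] [Nontrivial R] {a b : ℕ}

theorem degree_X_pow_lt_degree_X_pow (hab : b < a) :
    (X ^ b : R[X]).degree < (X ^ a : R[X]).degree := by
  simpa using hab

theorem degree_X_lt_degree_X_pow_add_X_pow (hb : 1 < b) (hab : b < a) :
    (X : R[X]).degree < (X ^ a + X ^ b : R[X]).degree := by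
  rw [degree_add_eq_left_of_degree_lt (degree_X_pow_lt_degree_X_pow hab)]
  simpa using hb.trans hab

theorem monic_X_pow_add_X_pow_add_X (hb : 1 < b) (hab : b < a) :
    (X ^ a + X ^ b + X : R[X]).Monic :=
  ((monic_X_pow a).add_of_left (degree_X_pow_lt_degree_X_pow hab)).add_of_left
    (degree_X_lt_degree_X_pow_add_X_pow hb hab)

theorem natDegree_X_pow_add_X_pow_add_X (hb : 1 < b) (hab : b < a) :
    (X ^ a + X ^ b + X : R[X]).natDegree = a := by
  rw [natDegree_add_eq_left_of_degree_lt (degree_X_lt_degree_X_pow_add_X_pow hb hab),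
    natDegree_add_eq_left_of_degree_lt (degree_X_pow_lt_degree_X_pow hab), natDegree_X_pow]

end Trinomial

section Divisibility

variable {K : Type*} [Field K] [Finite K]

theorem X_mul_dvd_X_pow_card_pow_sub_X {g : K[X]} (hg : Irreducible g) (hg0 : g.coeff 0 ≠ 0)
    {n : ℕ} (hn : g.natDegree ∣ n) : X * g ∣ X ^ Nat.card K ^ n - X := by
  have hcop : IsCoprime X g := irreducible_X.coprime_iff_not_dvd.mpr (by rwa [X_dvd_iff])
  exact hcop.mul_dvd (dvd_sub (dvd_pow_self X (pow_ne_zero _ Nat.card_pos.ne')) dvd_rfl)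
    (hg.natDegree_dvd_iff_dvd_X_pow_card_pow_sub_X.mp hn)

theorem X_pow_add_X_pow_add_X_dvd_X_pow_card_pow_sub_X {a b n : ℕ} (hb : 1 < b) (hab : b < a)
    (hirr : Irreducible (X ^ (a - 1) + X ^ (b - 1) + 1 : K[X])) (hn : a - 1 ∣ n) :
    (X ^ a + X ^ b + X : K[X]) ∣ X ^ Nat.card K ^ n - X := by
  set g : K[X] := X ^ (a - 1) + X ^ (b - 1) + 1 with hg
  have hXg : X * g = X ^ a + X ^ b + X := by
    rw [hg, mul_add, mul_add, mul_one, ← pow_succ', ← pow_succ', Nat.sub_add_cancel (by omega),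
      Nat.sub_add_cancel (by omega)]
  have hg0 : g.coeff 0 ≠ 0 := by
    rw [coeff_zero_eq_eval_zero, hg]
    simp [zero_pow (by omega : a - 1 ≠ 0), zero_pow (by omega : b - 1 ≠ 0)]
  have hdeg : g.natDegree = a - 1 := by
    have := congrArg natDegree hXg
    rw [natDegree_X_mul hirr.ne_zero, natDegree_X_pow_add_X_pow_add_X hb hab] at this
    omega
  rw [← hXg]
  exact X_mul_dvd_X_pow_card_pow_sub_X hirr hg0 (hdeg ▸ hn)

end Divisibility

namespace FiniteField

variable {F : Type*} [Field F] [Fintype F] {P : F[X]}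

theorem splits_of_dvd_X_pow_card_sub_X (h : P ∣ X ^ Fintype.card F - X) : P.Splits := by
  rw [← Nat.card_eq_fintype_card] at h
  exact Polynomial.splits_X_pow_nat_card_sub_X.of_dvd
    (X_pow_card_sub_X_ne_zero F Finite.one_lt_card) h

theorem nodup_roots_of_dvd_X_pow_card_sub_X (h : P ∣ X ^ Fintype.card F - X) :
    P.roots.Nodup := by
  refine Multiset.nodup_of_le
    (roots.le_of_dvd (X_pow_card_sub_X_ne_zero F Fintype.one_lt_card) h) ?_
  rw [roots_X_pow_card_sub_X]
  exact Finset.univ.nodup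

variable [DecidableEq F]

theorem prod_X_sub_C_roots_toFinset_of_dvd (hP : P.Monic) (h : P ∣ X ^ Fintype.card F - X) :
    ∏ x ∈ P.roots.toFinset, (X - C x) = P := by
  rw [Finset.prod_eq_multiset_prod, Multiset.toFinset_val,
    (nodup_roots_of_dvd_X_pow_card_sub_X h).dedup,
    ← (splits_of_dvd_X_pow_card_sub_X h).eq_prod_roots_of_monic hP]

theorem card_roots_toFinset_of_dvd (h : P ∣ X ^ Fintype.card F - X) :
    P.roots.toFinset.card = P.natDegree := by
  rw [Multiset.toFinset_card_of_nodup (nodup_roots_of_dvd_X_pow_card_sub_X h),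
    (splits_of_dvd_X_pow_card_sub_X h).natDegree_eq_card_roots]

end FiniteField

theorem subspacePoly_eq_prod {K F : Type*} [Field K] [Field F] [Algebra K F] [Fintype F]
    {V : Submodule K F} {S : Finset F} (h : (V : Set F) = S) :
    subspacePoly V = ∏ x ∈ S, (X - C x) := by
  unfold subspacePoly
  congr
  ext
  simp [h]

theorem finrank_eq_of_natCard_eq_pow {K M : Type*} [Field K] [Finite K] [AddCommGroup M]
    [Module K M] [Module.Finite K M] {k : ℕ} (h : Nat.card M = Nat.card K ^ k) :
    Module.finrank K M = k := by
  rw [Module.natCard_eq_pow_finrank (K := K)] at h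
  exact Nat.pow_right_injective Finite.one_lt_card h

section TrinomialKer

variable (K F : Type*) [Field K] [Fintype K] [CommRing F] [Algebra K F]

noncomputable def trinomialKer (k s : ℕ) : Submodule K F :=
  LinearMap.ker ((FiniteField.frobeniusAlgHom K F).toLinearMap ^ k +
    (FiniteField.frobeniusAlgHom K F).toLinearMap ^ s + 1)

variable {K F}

theorem mem_trinomialKer {k s : ℕ} {x : F} :
    x ∈ trinomialKer K F k s ↔ x ^ Fintype.card K ^ k + x ^ Fintype.card K ^ s + x = 0 := by
  simp [trinomialKer, Module.End.pow_apply, FiniteField.coe_frobeniusAlgHom, pow_iterate]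

end TrinomialKer

theorem coe_trinomialKer {K F : Type*} [Field K] [Fintype K] [Field F] [DecidableEq F]
    [Algebra K F] {k s : ℕ}
    (h : (X ^ Fintype.card K ^ k + X ^ Fintype.card K ^ s + X : F[X]) ≠ 0) :
    (trinomialKer K F k s : Set F) =
      (X ^ Fintype.card K ^ k + X ^ Fintype.card K ^ s + X : F[X]).roots.toFinset := by
  ext x
  simp [mem_roots h, mem_trinomialKer]

theorem trinomial_is_subspacePoly_of_irreducible_general
    {K F : Type*} [Field K] [Fintype K] [Field F] [Fintype F] [Algebra K F]
    (q n k s : ℕ) (hq : Fintype.card K = q)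
    (hF : Module.finrank K F = n) (hs : 0 < s) (hsk : s < k)
    (hdvd : q ^ k - 1 ∣ n)
    (hirr : Irreducible (X ^ (q ^ k - 1) + X ^ (q ^ s - 1) + 1 : K[X])) :
    ∃ V : Submodule K F, Module.finrank K ↥V = k ∧
      subspacePoly V = X ^ q ^ k + X ^ q ^ s + X := by
  classical
  subst hq
  set q := Fintype.card K
  have hqs : 1 < q ^ s := Nat.one_lt_pow hs.ne' Fintype.one_lt_card
  have hqsk : q ^ s < q ^ k := Nat.pow_lt_pow_right Fintype.one_lt_card hsk
  have hdvdF : (X ^ q ^ k + X ^ q ^ s + X : F[X]) ∣ X ^ Fintype.card F - X := by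
    have := map_dvd (algebraMap K F)
      (X_pow_add_X_pow_add_X_dvd_X_pow_card_pow_sub_X hqs hqsk hirr hdvd)
    simpa [Module.card_eq_pow_finrank (K := K) (V := F), hF] using this
  have hP := monic_X_pow_add_X_pow_add_X (R := F) hqs hqsk
  have hV := coe_trinomialKer (K := K) (k := k) (s := s) hP.ne_zero
  refine ⟨trinomialKer K F k s, finrank_eq_of_natCard_eq_pow ?_, ?_⟩
  · rw [← SetLike.coe_sort_coe, hV, Nat.card_coe_set_eq, Set.ncard_coe_finset,
      FiniteField.card_roots_toFinset_of_dvd hdvdF, natDegree_X_pow_add_X_pow_add_X hqs hqsk,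
      Nat.card_eq_fintype_card]
  · rw [subspacePoly_eq_prod hV, FiniteField.prod_X_sub_C_roots_toFinset_of_dvd hP hdvdF]

theorem trinomial_is_subspacePoly_of_irreducible
    {K F : Type*} [Field K] [Fintype K] [Field F] [Fintype F] [Algebra K F]
    (q n k s : ℕ) (hq : Fintype.card K = q) (hn : 0 < n)
    (hF : Module.finrank K F = n) (hs : 0 < s) (hsk : s < k)
    (hdvd : q ^ k - 1 ∣ n)
    (hirr : Irreducible (X ^ (q ^ k - 1) + X ^ (q ^ s - 1) + 1 : K[X])) :
    ∃ V : Submodule K F, Module.finrank K ↥V = k ∧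
      subspacePoly V = X ^ q ^ k + X ^ q ^ s + X :=
  trinomial_is_subspacePoly_of_irreducible_general q n k s hq hF hs hsk hdvd hirr
end

section
/- Let q be a prime power and k, s, n positive integers with s < k, q^k − 1 dividing n, and X^{q^k − 1} + X^{q^s − 1} + 1 irreducible over 𝔽_q. Let m be a positive integer dividing q^n − 1, set t := gcd(n, s), and let V be the k-dimensional 𝔽_q-subspace of 𝔽_{q^n} whose subspace polynomial is L_V(X) = X^{q^k} + X^{q^s} + X. Then the m-quasi cyclic code C := {α^m V : α ∈ 𝔽_{q^n}^*} satisfies m·(q^t − 1)·|C| ≥ q^n − 1; in particular, if gcd(n, s) = 1 then m·(q − 1)·|C| ≥ q^n − 1. -/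
/-!
If `γ ≠ 0` maps `V` onto itself, then `L_V(γX) = γ^{q^k} L_V(X)`; comparing the coefficients of
`X` and `X^{q^s}` of the trinomial gives `γ^{q^s} = γ`, so `γ ∈ 𝔽_{q^s} ∩ 𝔽_{q^n} = 𝔽_{q^t}`.
Hence `α^m V = β^m V` forces `(α/β)^{m(q^t-1)} = 1`, and every fibre of `α ↦ α^m V` on
`𝔽_{q^n}^*` has at most `m(q^t-1)` elements.
-/

open Polynomial

section QuasiShift

variable {K F : Type*} [Field K] [Field F] [Algebra K F]

def quasiOrbit (m : ℕ) (V : Submodule K F) : Set (Submodule K F) :=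
  {W | ∃ α : F, α ≠ 0 ∧ W = qshift (α ^ m) V}

theorem mem_qshift_self {a : F} {V : Submodule K F} (h : qshift a V = V) {v : F}
    (hv : v ∈ V) : a * v ∈ V :=
  h ▸ Submodule.mem_map_of_mem (f := LinearMap.mulLeft K a) hv

theorem qshift_div_pow_eq_self {α β : F} {m : ℕ} {V : Submodule K F} (hβ : β ≠ 0)
    (h : qshift (α ^ m) V = qshift (β ^ m) V) : qshift ((α / β) ^ m) V = V := by
  rw [div_pow, div_eq_inv_mul, qshift_mul, h, ← qshift_mul,
    inv_mul_cancel₀ (pow_ne_zero m hβ), qshift_one]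

theorem qshift_inv_eq_self {a : F} (ha : a ≠ 0) {V : Submodule K F} (h : qshift a V = V) :
    qshift a⁻¹ V = V := by
  conv_lhs => rw [← h, ← qshift_mul, inv_mul_cancel₀ ha, qshift_one]

end QuasiShift

theorem subspacePoly_comp_C_mul_X {K F : Type*} [Field K] [Field F] [Algebra K F] [Fintype F]
    {V : Submodule K F} {γ : F} (hγ : γ ≠ 0) (hV : qshift γ V = V) :
    (subspacePoly V).comp (C γ * X) = C (γ ^ Nat.card V) * subspacePoly V := by
  have hV' := qshift_inv_eq_self hγ hV
  set S := (Set.toFinite (V : Set F)).toFinset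
  have hS : S.card = Nat.card V := by
    rw [← Set.ncard_eq_toFinset_card]; rfl
  have hmem : ∀ v, v ∈ S ↔ v ∈ V := fun v => Set.Finite.mem_toFinset _
  calc (subspacePoly V).comp (C γ * X) = ∏ v ∈ S, (C γ * X - C (γ * v)) := by
        rw [subspacePoly, prod_comp]
        refine Finset.prod_nbij' (γ⁻¹ * ·) (γ * ·) ?_ ?_ ?_ ?_ ?_ <;> intro v hv
        · exact (hmem _).2 (mem_qshift_self hV' ((hmem v).1 hv))
        · exact (hmem _).2 (mem_qshift_self hV ((hmem v).1 hv))
        · exact mul_inv_cancel_left₀ hγ v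
        · exact inv_mul_cancel_left₀ hγ v
        · simp [mul_inv_cancel_left₀ hγ]
    _ = ∏ v ∈ S, C γ * (X - C v) := by
        simp only [mul_sub, C_mul]
    _ = C (γ ^ Nat.card V) * subspacePoly V := by
        rw [Finset.prod_mul_distrib, Finset.prod_const, hS, C_pow, subspacePoly]

theorem pow_eq_self_of_trinomial_comp_C_mul_X {R : Type*} [CommRing R] {a b : ℕ} (hb : 1 < b)
    (hba : b < a) {γ c : R}
    (h : (X ^ a + X ^ b + X : R[X]).comp (C γ * X) = C c * (X ^ a + X ^ b + X)) :
    γ ^ b = γ := by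
  have h1 := congrArg (coeff · 1) h
  have h2 := congrArg (coeff · b) h
  simp only [comp_C_mul_X_coeff, coeff_C_mul, coeff_add, coeff_X_pow, coeff_X, hb.ne,
    (hb.trans hba).ne, hba.ne, ↓reduceIte, add_zero, zero_add, pow_one, one_mul, mul_one] at h1 h2
  exact h2.trans h1.symm

section Trinomial

variable {K F : Type*} [Field K] [Fintype K] [Field F] [Fintype F] [Algebra K F]
  {q k s : ℕ} {V : Submodule K F}

theorem pow_sub_one_eq_one_of_qshift_eq_self (hq : Fintype.card K = q) (hs : 0 < s)
    (hsk : s < k) (hVk : Module.finrank K V = k)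
    (hLV : subspacePoly V = X ^ q ^ k + X ^ q ^ s + X) {γ : F} (hγ : γ ≠ 0)
    (hV : qshift γ V = V) : γ ^ (q ^ s - 1) = 1 := by
  have hq1 : 1 < q := hq ▸ Fintype.one_lt_card
  have hcomp := subspacePoly_comp_C_mul_X hγ hV
  rw [hLV, Module.natCard_eq_pow_finrank (K := K), Nat.card_eq_fintype_card, hq, hVk] at hcomp
  have hγs := pow_eq_self_of_trinomial_comp_C_mul_X (Nat.one_lt_pow hs.ne' hq1)
    (Nat.pow_lt_pow_right hq1 hsk) hcomp
  refine mul_right_cancel₀ hγ ?_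
  rw [pow_sub_one_mul (pow_pos (by omega) s).ne', hγs, one_mul]

theorem pow_pow_gcd_sub_one_eq_one_of_qshift_eq_self {n : ℕ} (hq : Fintype.card K = q)
    (hF : Module.finrank K F = n) (hs : 0 < s) (hsk : s < k) (hVk : Module.finrank K V = k)
    (hLV : subspacePoly V = X ^ q ^ k + X ^ q ^ s + X) {γ : F} (hγ : γ ≠ 0)
    (hV : qshift γ V = V) : γ ^ (q ^ Nat.gcd n s - 1) = 1 := by
  have hγn : γ ^ (q ^ n - 1) = 1 := by
    rw [← hq, ← hF, ← Module.card_eq_pow_finrank]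
    exact FiniteField.pow_card_sub_one_eq_one γ hγ
  rw [← Nat.pow_sub_one_gcd_pow_sub_one]
  exact pow_gcd_eq_one.2 ⟨hγn, pow_sub_one_eq_one_of_qshift_eq_self hq hs hsk hVk hLV hγ hV⟩

end Trinomial

theorem card_sub_one_le_mul_ncard_quasiOrbit {K F : Type*} [Field K] [Field F] [Fintype F]
    [Algebra K F] {V : Submodule K F} {m e : ℕ} (hme : 0 < m * e)
    (hstab : ∀ γ : F, γ ≠ 0 → qshift γ V = V → γ ^ e = 1) :
    Fintype.card F - 1 ≤ m * e * (quasiOrbit m V).ncard := by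
  classical
  set A := (Finset.univ : Finset F).erase 0
  have horbit : quasiOrbit m V = ↑(A.image fun α => qshift (α ^ m) V) := by
    ext W
    simp [quasiOrbit, A, eq_comm]
  rw [horbit, Set.ncard_coe_finset, ← Finset.card_univ, ← Finset.card_erase_of_mem
    (Finset.mem_univ 0)]
  refine Finset.card_le_mul_card_image A _ fun W hW => ?_
  obtain ⟨β, hβ, rfl⟩ := Finset.mem_image.1 hW
  have hβ0 : β ≠ 0 := Finset.ne_of_mem_erase hβ
  calc _ ≤ (nthRootsFinset (m * e) (1 : F)).card := by
        refine Finset.card_le_card_of_injOn (· / β) (fun α hα => ?_)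
          (fun a _ b _ h => (div_left_inj' hβ0).1 h)
        obtain ⟨hα, hαβ⟩ := Finset.mem_filter.1 hα
        have hγ : α / β ≠ 0 := div_ne_zero (Finset.ne_of_mem_erase hα) hβ0
        rw [Finset.mem_coe, mem_nthRootsFinset hme, pow_mul]
        exact hstab _ (pow_ne_zero m hγ) (qshift_div_pow_eq_self hβ0 hαβ)
    _ ≤ m * e := by
        rw [nthRootsFinset_def]
        exact (Multiset.toFinset_card_le _).trans (card_nthRoots _ _)

theorem trinomial_quasi_orbit_code_size_general
    {K F : Type*} [Field K] [Fintype K] [Field F] [Fintype F] [Algebra K F]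
    (q n k s m : ℕ) (hq : Fintype.card K = q)
    (hF : Module.finrank K F = n) (hs : 0 < s) (hsk : s < k)
    (hm : 0 < m)
    (V : Submodule K F) (hVk : Module.finrank K ↥V = k)
    (hLV : subspacePoly V = X ^ q ^ k + X ^ q ^ s + X) :
    q ^ n - 1 ≤
      m * (q ^ Nat.gcd n s - 1) *
        Set.ncard {W : Submodule K F | ∃ α : F, α ≠ 0 ∧ W = qshift (α ^ m) V} ∧
    (Nat.gcd n s = 1 →
      q ^ n - 1 ≤
        m * (q - 1) *
          Set.ncard {W : Submodule K F | ∃ α : F, α ≠ 0 ∧ W = qshift (α ^ m) V}) := by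
  have hq1 : 1 < q := hq ▸ Fintype.one_lt_card
  have hqt : 1 < q ^ Nat.gcd n s := Nat.one_lt_pow (Nat.gcd_pos_of_pos_right n hs).ne' hq1
  have hcard : Fintype.card F = q ^ n := by rw [Module.card_eq_pow_finrank (K := K), hq, hF]
  have hbound : q ^ n - 1 ≤ m * (q ^ Nat.gcd n s - 1) * (quasiOrbit m V).ncard := by
    rw [← hcard]
    exact card_sub_one_le_mul_ncard_quasiOrbit (Nat.mul_pos hm (by omega))
      fun γ hγ hV => pow_pow_gcd_sub_one_eq_one_of_qshift_eq_self hq hF hs hsk hVk hLV hγ hV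
  exact ⟨hbound, fun h => by rwa [h, pow_one] at hbound⟩

theorem trinomial_quasi_orbit_code_size
    {K F : Type*} [Field K] [Fintype K] [Field F] [Fintype F] [Algebra K F]
    (q n k s m : ℕ) (hq : Fintype.card K = q) (hn : 0 < n)
    (hF : Module.finrank K F = n) (hs : 0 < s) (hsk : s < k)
    (hdvd : q ^ k - 1 ∣ n)
    (hirr : Irreducible (X ^ (q ^ k - 1) + X ^ (q ^ s - 1) + 1 : K[X]))
    (hm : 0 < m) (hmdvd : m ∣ q ^ n - 1)
    (V : Submodule K F) (hVk : Module.finrank K ↥V = k)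
    (hLV : subspacePoly V = X ^ q ^ k + X ^ q ^ s + X) :
    q ^ n - 1 ≤
      m * (q ^ Nat.gcd n s - 1) *
        Set.ncard {W : Submodule K F | ∃ α : F, α ≠ 0 ∧ W = qshift (α ^ m) V} ∧
    (Nat.gcd n s = 1 →
      q ^ n - 1 ≤
        m * (q - 1) *
          Set.ncard {W : Submodule K F | ∃ α : F, α ≠ 0 ∧ W = qshift (α ^ m) V}) :=
  trinomial_quasi_orbit_code_size_general q n k s m hq hF hs hsk hm V hVk hLV
end

section
/- Let q be a prime power and k, s, n positive integers with s < k, q^k − 1 dividing n, and X^{q^k − 1} + X^{q^s − 1} + 1 irreducible over 𝔽_q. Let m be a positive integer dividing q^n − 1 and let V be the k-dimensional 𝔽_q-subspace of 𝔽_{q^n} whose subspace polynomial is L_V(X) = X^{q^k} + X^{q^s} + X. Then for all α, β ∈ 𝔽_{q^n}^* with α^m V ≠ β^m V, one has dim_{𝔽_q}(α^m V ∩ β^m V) ≤ s, and hence the subspace distance satisfies d(α^m V, β^m V) ≥ 2(k − s). -/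
open Polynomial

theorem trinomial_quasi_orbit_code_distance
    {K F : Type*} [Field K] [Fintype K] [Field F] [Fintype F] [Algebra K F]
    (q n k s m : ℕ) (hq : Fintype.card K = q) (hn : 0 < n)
    (hF : Module.finrank K F = n) (hs : 0 < s) (hsk : s < k)
    (hdvd : q ^ k - 1 ∣ n)
    (hirr : Irreducible (X ^ (q ^ k - 1) + X ^ (q ^ s - 1) + 1 : K[X]))
    (hm : 0 < m) (hmdvd : m ∣ q ^ n - 1)
    (V : Submodule K F) (hVk : Module.finrank K ↥V = k)
    (hLV : subspacePoly V = X ^ q ^ k + X ^ q ^ s + X) :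
    ∀ α β : F, α ≠ 0 → β ≠ 0 → qshift (α ^ m) V ≠ qshift (β ^ m) V →
      Module.finrank K ↥(qshift (α ^ m) V ⊓ qshift (β ^ m) V) ≤ s ∧
      2 * (k - s) ≤ subspaceDist (qshift (α ^ m) V) (qshift (β ^ m) V) := by
  classical
  have hq2 : 1 < q := hq ▸ Fintype.one_lt_card
  have hqs_le : q ^ s ≤ q ^ k := Nat.pow_le_pow_right (by omega) hsk.le
  have hqk1 : 1 ≤ q ^ k := Nat.one_le_pow _ _ (by omega)
  have hqs1 : 1 < q ^ s := Nat.one_lt_pow hs.ne' hq2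
  set e := q ^ k - q ^ s with he
  set f := q ^ k - 1 with hf
  have hef : e + q ^ s = q ^ k := Nat.sub_add_cancel hqs_le
  have hf1 : f + 1 = q ^ k := Nat.sub_add_cancel hqk1
  -- membership in V is given by the trinomial equation
  have hmem : ∀ v : F, v ∈ V ↔ v ^ q ^ k + v ^ q ^ s + v = 0 := by
    intro v
    have h1 : v ∈ V ↔ eval v (subspacePoly V) = 0 := by
      unfold subspacePoly
      rw [eval_prod]
      constructor
      · intro hv
        exact Finset.prod_eq_zero ((Set.Finite.mem_toFinset _).mpr hv) (by simp)
      · intro hv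
        obtain ⟨w, hw, hvw⟩ := Finset.prod_eq_zero_iff.mp hv
        have : v = w := by
          have := hvw
          simp only [eval_sub, eval_X, eval_C, sub_eq_zero] at this
          exact this
        exact this ▸ (Set.Finite.mem_toFinset _).mp hw
    rw [h1, hLV]
    simp
  -- the exponent identity
  have hexp : ∀ c v : F, (c * v) ^ q ^ k + c ^ e * (c * v) ^ q ^ s + c ^ f * (c * v)
      = c ^ q ^ k * (v ^ q ^ k + v ^ q ^ s + v) := by
    intro c v
    have hce : c ^ e * c ^ (q ^ s) = c ^ (q ^ k) := by rw [← pow_add, hef]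
    have hcf : c ^ f * c = c ^ (q ^ k) := by rw [← pow_succ, hf1]
    calc (c * v) ^ q ^ k + c ^ e * (c * v) ^ q ^ s + c ^ f * (c * v)
        = c ^ q ^ k * v ^ q ^ k + (c ^ e * c ^ (q ^ s)) * v ^ q ^ s
            + (c ^ f * c) * v := by rw [mul_pow, mul_pow]; ring
      _ = c ^ q ^ k * (v ^ q ^ k + v ^ q ^ s + v) := by rw [hce, hcf]; ring
  -- membership in a shift
  have hkey : ∀ c : F, c ≠ 0 → ∀ w : F,
      w ∈ qshift c V ↔ w ^ q ^ k + c ^ e * w ^ q ^ s + c ^ f * w = 0 := by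
    intro c hc w
    constructor
    · intro hw
      obtain ⟨v, hv, rfl⟩ := Submodule.mem_map.mp hw
      show (c * v) ^ q ^ k + c ^ e * (c * v) ^ q ^ s + c ^ f * (c * v) = 0
      rw [hexp, (hmem v).mp hv, mul_zero]
    · intro hw
      refine Submodule.mem_map.mpr ⟨c⁻¹ * w, ?_, ?_⟩
      · refine (hmem _).mpr ?_
        have h2 : c ^ q ^ k * ((c⁻¹ * w) ^ q ^ k + (c⁻¹ * w) ^ q ^ s + c⁻¹ * w) = 0 := by
          rw [← hexp, mul_inv_cancel_left₀ hc]
          exact hw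
        exact (mul_eq_zero.mp h2).resolve_left (pow_ne_zero _ hc)
      · show c * (c⁻¹ * w) = w
        exact mul_inv_cancel_left₀ hc w
  intro α β hα hβ hne
  set a := α ^ m with ha
  set b := β ^ m with hb
  have ha0 : a ≠ 0 := pow_ne_zero _ hα
  have hb0 : b ≠ 0 := pow_ne_zero _ hβ
  -- the coefficients cannot both agree
  have hD : ¬ (a ^ e = b ^ e ∧ a ^ f = b ^ f) := by
    rintro ⟨h1, h2⟩
    apply hne
    ext w
    rw [hkey a ha0 w, hkey b hb0 w, h1, h2]
  -- dimension of the intersection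
  have hdim : Module.finrank K ↥(qshift a V ⊓ qshift b V) ≤ s := by
    set P : F[X] := C (a ^ e - b ^ e) * X ^ q ^ s + C (a ^ f - b ^ f) * X with hP
    have hP0 : P ≠ 0 := by
      intro h
      apply hD
      constructor
      · have := congrArg (fun p => coeff p (q ^ s)) h
        simp only [hP, coeff_add, coeff_C_mul, coeff_X_pow, coeff_X, coeff_zero] at this
        simp only [if_pos rfl, if_neg (by omega : ¬ (1 : ℕ) = q ^ s)] at this
        have : a ^ e - b ^ e = 0 := by simpa using this
        linear_combination this
      · have := congrArg (fun p => coeff p 1) h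
        simp only [hP, coeff_add, coeff_C_mul, coeff_X_pow, coeff_X, coeff_zero] at this
        simp only [if_neg (by omega : ¬ (1 : ℕ) = q ^ s)] at this
        have : a ^ f - b ^ f = 0 := by simpa using this
        linear_combination this
    have hPdeg : P.natDegree ≤ q ^ s := by
      refine le_trans (natDegree_add_le _ _) ?_
      apply max_le
      · exact le_trans (natDegree_C_mul_le _ _) (by simp)
      · exact le_trans (natDegree_C_mul_le _ _) (by simp [Nat.one_le_iff_ne_zero]; omega)
    have hroot : ∀ u : F, u ∈ qshift a V ⊓ qshift b V → IsRoot P u := by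
      rintro u ⟨hu1, hu2⟩
      have e1 := (hkey a ha0 u).mp hu1
      have e2 := (hkey b hb0 u).mp hu2
      simp only [IsRoot, hP, eval_add, eval_mul, eval_C, eval_pow, eval_X]
      linear_combination e1 - e2
    -- count
    have hsub : Set.toFinset ((qshift a V ⊓ qshift b V : Submodule K F) : Set F)
        ⊆ P.roots.toFinset := by
      intro u hu
      rw [Set.mem_toFinset] at hu
      rw [Multiset.mem_toFinset, mem_roots hP0]
      exact hroot u hu
    have hcard : Fintype.card ↥(qshift a V ⊓ qshift b V) ≤ q ^ s := by
      calc Fintype.card ↥(qshift a V ⊓ qshift b V)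
          = (Set.toFinset ((qshift a V ⊓ qshift b V : Submodule K F) : Set F)).card := by
            rw [Set.toFinset_card]; rfl
        _ ≤ P.roots.toFinset.card := Finset.card_le_card hsub
        _ ≤ Multiset.card P.roots := Multiset.toFinset_card_le _
        _ ≤ P.natDegree := P.card_roots' 
        _ ≤ q ^ s := hPdeg
    have hcard2 : Fintype.card ↥(qshift a V ⊓ qshift b V)
        = q ^ Module.finrank K ↥(qshift a V ⊓ qshift b V) := by
      rw [Module.card_eq_pow_finrank (K := K), hq]
    rw [hcard2] at hcard
    exact (Nat.pow_le_pow_iff_right hq2).mp hcard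
  refine ⟨hdim, ?_⟩
  -- ranks of the shifts
  have hr : ∀ c : F, c ≠ 0 → Module.finrank K ↥(qshift c V) = k := by
    intro c hc
    rw [← hVk]
    exact (Submodule.equivMapOfInjective (LinearMap.mulLeft K c)
      (fun x y hxy => mul_left_cancel₀ hc hxy) V).finrank_eq.symm
  unfold subspaceDist
  rw [hr a ha0, hr b hb0]
  omega
end

section
/- Let q be a prime power, n a prime number, t a positive integer, and N = nt, so that 𝔽_{q^n} is a subfield of 𝔽_{q^N}. Let m be a positive integer dividing q^n − 1, let 1 ≤ s < k, let a_0, a_s be nonzero elements of the subfield 𝔽_{q^n} of 𝔽_{q^N}, and let V be a k-dimensional 𝔽_q-subspace of 𝔽_{q^N} whose subspace polynomial is L_V(X) = X^{q^k} + a_s X^{q^s} + a_0 X. Assume that a_0^{q^k − q^s} · (a_s^{q^k − 1})^{−1} does not lie in the subfield 𝔽_q of 𝔽_{q^N} (this is the paper's hypothesis that a_s^{(q^k−1)/(q^s−1)} is not ∼_1-equivalent to a_0^{(q^k−q^s)/(q^s−1)}). Then for all i, j ∈ {0, 1, …, n−1} with i ≠ j and all β, δ ∈ 𝔽_{q^N}^*,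 one has β^m σ_i(V) ≠ δ^m σ_j(V); that is, the n quasi-orbits {α^m σ_i(V) : α ∈ 𝔽_{q^N}^*}, i = 0, …, n−1, are pairwise disjoint. -/
/-! If `β ^ m • σ_i(V) = δ ^ m • σ_j(V) = W`, every element of `W` is a root both of
`X ^ q ^ k + a_s ^ q ^ i β ^ (m (q ^ k - q ^ s)) X ^ q ^ s + a_0 ^ q ^ i β ^ (m (q ^ k - 1)) X`
and of the same trinomial with `(j, δ)` in place of `(i, β)`. Their difference has degree
`q ^ s < q ^ k = |W|`, so the coefficients agree. Eliminating `β` and `δ`, the element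
`z = a_0 ^ (q ^ k - q ^ s) / a_s ^ (q ^ k - 1)` satisfies `z ^ q ^ i = z ^ q ^ j`, i.e. it is
periodic for the Frobenius with period `|i - j|`; it also has period `n`, and `n` is prime, so
the Frobenius fixes `z` and `z ∈ 𝔽_q`. -/

open Polynomial

open Function

theorem Function.IsPeriodicPt.isFixedPt_of_iterate_eq {α : Type*} {f : α → α} {x : α}
    {n i j : ℕ} (hf : Injective f) (hn : n.Prime) (hx : IsPeriodicPt f n x)
    (hi : i < n) (hj : j < n) (hij : i ≠ j) (h : f^[i] x = f^[j] x) : IsFixedPt f x := by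
  wlog hlt : i < j generalizing i j
  · exact this hj hi hij.symm h.symm (by omega)
  have hper : IsPeriodicPt f (j - i) x :=
    hf.iterate i (by rw [← iterate_add_apply, Nat.add_sub_cancel' hlt.le, h])
  have hcop : Nat.Coprime n (j - i) :=
    hn.coprime_iff_not_dvd.mpr (Nat.not_dvd_of_pos_of_lt (by omega) (by omega))
  have hfix := hx.gcd hper
  rwa [hcop.gcd_eq_one] at hfix

theorem pow_div_pow_eq_of_mul_pow_eq {G₀ : Type*} [CommGroupWithZero G₀]
    {A A' B B' γ δ : G₀} {a b : ℕ} (hγ : γ ≠ 0) (hδ : δ ≠ 0)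
    (hA : A * γ ^ a = A' * δ ^ a) (hB : B * γ ^ b = B' * δ ^ b) :
    B ^ a / A ^ b = B' ^ a / A' ^ b := by
  have key {A B γ : G₀} (hγ : γ ≠ 0) :
      B ^ a / A ^ b = (B * γ ^ b) ^ a / (A * γ ^ a) ^ b := by
    rw [mul_pow, mul_pow, ← pow_mul, ← pow_mul, mul_comm b a,
      mul_div_mul_right _ _ (pow_ne_zero _ hγ)]
  rw [key hγ, hA, hB, ← key hδ]

theorem map_trinomial_root {R S : Type*} [CommRing R] [CommRing S] (φ : R →+* S) {a b : ℕ}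
    (hba : b ≤ a) (ha : 1 ≤ a) {A B v : R} (γ : S) (hv : v ^ a + A * v ^ b + B * v = 0) :
    (γ * φ v) ^ a + φ A * γ ^ (a - b) * (γ * φ v) ^ b
      + φ B * γ ^ (a - 1) * (γ * φ v) = 0 := by
  have hγb : γ ^ (a - b) * γ ^ b = γ ^ a := pow_sub_mul_pow γ hba
  have hγ1 : γ ^ (a - 1) * γ = γ ^ a := pow_sub_one_mul (by omega) γ
  calc _ = γ ^ a * φ (v ^ a + A * v ^ b + B * v) := by
        simp only [map_add, map_mul, map_pow, mul_pow]
        linear_combination (φ A * φ v ^ b) * hγb + (φ B * φ v) * hγ1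
    _ = 0 := by rw [hv, map_zero, mul_zero]

theorem trinomial_coeffs_eq_of_roots {F : Type*} [Field F] {S : Set F} {a b : ℕ} (hb : 1 < b)
    (hS : b < Nat.card S) {A B A' B' : F} (h : ∀ w ∈ S, w ^ a + A * w ^ b + B * w = 0)
    (h' : ∀ w ∈ S, w ^ a + A' * w ^ b + B' * w = 0) : A = A' ∧ B = B' := by
  have : Finite S := Nat.finite_of_card_ne_zero (by omega)
  have := Fintype.ofFinite S
  have hdeg (c d : F) : (C c * X ^ b + C d * X).natDegree ≤ b :=
    natDegree_add_le_of_degree_le (natDegree_C_mul_X_pow_le c b)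
      (((natDegree_C_mul_le d X).trans natDegree_X_le).trans hb.le)
  have hpoly : C A * X ^ b + C B * X = C A' * X ^ b + C B' * X := by
    refine eq_of_natDegree_lt_card_of_eval_eq _ _ (Subtype.val_injective (p := (· ∈ S)))
      (fun w => ?_) ?_
    · simp only [eval_add, eval_mul, eval_C, eval_pow, eval_X]
      linear_combination h w w.2 - h' w w.2
    · exact (max_le (hdeg A B) (hdeg A' B')).trans_lt (by rwa [Nat.card_eq_fintype_card] at hS)
  have hb1 : b ≠ 1 := hb.ne'
  constructor
  · simpa [hb1, hb1.symm, coeff_X, coeff_X_pow, coeff_C_mul] using congrArg (coeff · b) hpoly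
  · simpa [hb1, hb1.symm, coeff_X, coeff_X_pow, coeff_C_mul] using congrArg (coeff · 1) hpoly

namespace FiniteField

theorem mem_range_algebraMap_of_pow_card_eq_self {K L : Type*} [Field K] [Fintype K] [Field L]
    [Algebra K L] {x : L} (hx : x ^ Fintype.card K = x) : x ∈ Set.range (algebraMap K L) := by
  have hsplits : (X ^ Fintype.card K - X : K[X]).Splits := by
    rw [splits_iff_card_roots, roots_X_pow_card_sub_X,
      X_pow_card_sub_X_natDegree_eq K Fintype.one_lt_card]
    rfl
  exact hsplits.mem_range_of_isRoot (X_pow_card_sub_X_ne_zero K Fintype.one_lt_card)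
    (by simp [hx])

variable {K R : Type*} [Field K] [Fintype K] [CommRing R] [Algebra K R]

theorem iterate_frobeniusAlgHom (r : ℕ) :
    (⇑(frobeniusAlgHom K R))^[r] = (· ^ Fintype.card K ^ r) := by
  rw [coe_frobeniusAlgHom, pow_iterate]

theorem frobeniusAlgHom_pow_apply_s15 (r : ℕ) (x : R) :
    (frobeniusAlgHom K R ^ r) x = x ^ Fintype.card K ^ r := by
  rw [AlgHom.coe_pow, iterate_frobeniusAlgHom]

theorem natCard_image_mul_pow_card_pow {F : Type*} [Field F] [Finite F] [Algebra K F]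
    (V : Submodule K F) {γ : F} (hγ : γ ≠ 0) (r : ℕ) :
    Nat.card ((fun v => γ * v ^ Fintype.card K ^ r) '' (V : Set F)) =
      Fintype.card K ^ Module.finrank K V := by
  have hfrob : Injective (frobeniusAlgHom K F) := (frobeniusAlgHom K F).injective
  replace hfrob := hfrob.iterate r
  rw [iterate_frobeniusAlgHom] at hfrob
  have hinj : Injective fun v : F => γ * v ^ Fintype.card K ^ r :=
    (mul_right_injective₀ hγ).comp hfrob
  rw [Nat.card_image_of_injective hinj, ← Nat.card_eq_fintype_card]
  exact Module.natCard_eq_pow_finrank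

end FiniteField

theorem eval_subspacePoly_of_mem {K F : Type*} [Field K] [Field F] [Algebra K F] [Fintype F]
    {V : Submodule K F} {v : F} (hv : v ∈ V) : (subspacePoly V).eval v = 0 := by
  rw [subspacePoly, eval_prod]
  exact Finset.prod_eq_zero (by simpa using hv) (by simp)

open FiniteField

theorem frobenius_quasi_orbits_pairwise_disjoint_general
    {K F : Type*} [Field K] [Fintype K] [Field F] [Fintype F] [Algebra K F]
    (q n m k s : ℕ) (hq : Fintype.card K = q)
    (hnp : n.Prime)
    (hs1 : 1 ≤ s) (hsk : s < k)
    (a0 as : F)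
    (ha0sub : a0 ^ q ^ n = a0) (hassub : as ^ q ^ n = as)
    (V : Submodule K F) (hVk : Module.finrank K ↥V = k)
    (hLV : subspacePoly V = X ^ q ^ k + C as * X ^ q ^ s + C a0 * X)
    (hz : a0 ^ (q ^ k - q ^ s) * (as ^ (q ^ k - 1))⁻¹ ∉ Set.range (algebraMap K F)) :
    ∀ i j : ℕ, i < n → j < n → i ≠ j → ∀ β δ : F, β ≠ 0 → δ ≠ 0 →
      (fun v => β ^ m * v ^ q ^ i) '' (V : Set F) ≠
        (fun v => δ ^ m * v ^ q ^ j) '' (V : Set F) := by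
  intro i j hi hj hij β δ hβ hδ heq
  have hq1 : 1 < q := hq ▸ Fintype.one_lt_card
  have hroot (v : F) (hv : v ∈ V) : v ^ q ^ k + as * v ^ q ^ s + a0 * v = 0 := by
    simpa [hLV] using eval_subspacePoly_of_mem hv
  have hshift (r : ℕ) (γ : F) : ∀ w ∈ (fun v => γ * v ^ q ^ r) '' (V : Set F),
      w ^ q ^ k + as ^ q ^ r * γ ^ (q ^ k - q ^ s) * w ^ q ^ s
        + a0 ^ q ^ r * γ ^ (q ^ k - 1) * w = 0 := by
    rintro _ ⟨v, hv, rfl⟩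
    have := map_trinomial_root (frobeniusAlgHom K F ^ r : F →ₐ[K] F).toRingHom
      (Nat.pow_le_pow_right (by omega) hsk.le) (Nat.one_le_pow _ _ (by omega)) γ (hroot v hv)
    simpa only [AlgHom.toRingHom_eq_coe, RingHom.coe_coe, frobeniusAlgHom_pow_apply_s15, hq] using this
  have hcard : q ^ s < Nat.card ((fun v => β ^ m * v ^ q ^ i) '' (V : Set F)) := by
    rw [← hq, natCard_image_mul_pow_card_pow V (pow_ne_zero m hβ), hVk, hq]
    exact Nat.pow_lt_pow_right hq1 hsk
  obtain ⟨has_eq, ha0_eq⟩ := trinomial_coeffs_eq_of_roots (Nat.one_lt_pow (by omega) hq1) hcard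
    (hshift i (β ^ m)) (heq ▸ hshift j (δ ^ m))
  set z := a0 ^ (q ^ k - q ^ s) * (as ^ (q ^ k - 1))⁻¹ with hz_def
  have hz_pow (r : ℕ) :
      z ^ q ^ r = (a0 ^ q ^ r) ^ (q ^ k - q ^ s) / (as ^ q ^ r) ^ (q ^ k - 1) := by
    rw [hz_def, ← div_eq_mul_inv, div_pow, pow_right_comm, pow_right_comm as]
  have hz_iterate (r : ℕ) : (⇑(frobeniusAlgHom K F))^[r] z = z ^ q ^ r := by
    rw [iterate_frobeniusAlgHom, hq]
  have hperiodic : IsPeriodicPt (frobeniusAlgHom K F) n z := by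
    rw [IsPeriodicPt, IsFixedPt, hz_iterate, hz_pow, ha0sub, hassub, div_eq_mul_inv]
  have hfixed : IsFixedPt (frobeniusAlgHom K F) z := by
    refine hperiodic.isFixedPt_of_iterate_eq (frobeniusAlgHom K F).injective hnp hi hj hij ?_
    rw [hz_iterate, hz_iterate, hz_pow, hz_pow]
    exact pow_div_pow_eq_of_mul_pow_eq (pow_ne_zero m hβ) (pow_ne_zero m hδ) has_eq ha0_eq
  exact hz (mem_range_algebraMap_of_pow_card_eq_self hfixed)

theorem frobenius_quasi_orbits_pairwise_disjoint
    {K F : Type*} [Field K] [Fintype K] [Field F] [Fintype F] [Algebra K F]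
    (q n t N m k s : ℕ) (hq : Fintype.card K = q)
    (hnp : n.Prime) (ht : 0 < t) (hN : N = n * t)
    (hF : Module.finrank K F = N) (hm : 0 < m) (hmdvd : m ∣ q ^ n - 1)
    (hs1 : 1 ≤ s) (hsk : s < k)
    (a0 as : F) (ha0 : a0 ≠ 0) (has : as ≠ 0)
    (ha0sub : a0 ^ q ^ n = a0) (hassub : as ^ q ^ n = as)
    (V : Submodule K F) (hVk : Module.finrank K ↥V = k)
    (hLV : subspacePoly V = X ^ q ^ k + C as * X ^ q ^ s + C a0 * X)
    (hz : a0 ^ (q ^ k - q ^ s) * (as ^ (q ^ k - 1))⁻¹ ∉ Set.range (algebraMap K F)) :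
    ∀ i j : ℕ, i < n → j < n → i ≠ j → ∀ β δ : F, β ≠ 0 → δ ≠ 0 →
      (fun v => β ^ m * v ^ q ^ i) '' (V : Set F) ≠
        (fun v => δ ^ m * v ^ q ^ j) '' (V : Set F) :=
  frobenius_quasi_orbits_pairwise_disjoint_general q n m k s hq hnp hs1 hsk a0 as ha0sub hassub V
    hVk hLV hz
end

section
/- Let q be a prime power, n a prime number, t a positive integer, N = nt, m a positive integer dividing q^n − 1, and 1 ≤ s < k. Let a_0, a_s be nonzero elements of 𝔽_{q^N} and let V be a k-dimensional 𝔽_q-subspace of 𝔽_{q^N} whose subspace polynomial is L_V(X) = X^{q^k} + a_s X^{q^s} + a_0 X. Consider the code C := ∪_{i=0}^{n−1} {α^m σ_i(V) : α ∈ 𝔽_{q^N}^*}. Then any two distinct codewords W₁ ≠ W₂ of C satisfy dim_{𝔽_q}(W₁ ∩ W₂) ≤ s, and hence the minimum subspace distance of C is at least 2(k − s). -/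
open Polynomial

/-! Raising to the power `q ^ i` and scaling by `γ = α ^ m` carry the roots of
`L_V = X ^ q ^ k + a_s X ^ q ^ s + a_0 X` to roots of another trinomial
`X ^ q ^ k + b X ^ q ^ s + c X`; as the codeword has `q ^ k` elements, it is exactly the root set
of that trinomial. Distinct codewords therefore come from distinct trinomials, and their
intersection lies in the root set of the difference, a nonzero polynomial of degree at most
`q ^ s`. Hence the intersection has at most `q ^ s` elements, i.e. dimension at most `s`. -/

namespace Polynomial

variable {R R' : Type*} [CommRing R] [CommRing R']

noncomputable def linearizedTrinomial (Q S : ℕ) (b c : R) : R[X] := X ^ Q + C b * X ^ S + C c * X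

theorem map_linearizedTrinomial (φ : R →+* R') (Q S : ℕ) (b c : R) :
    (linearizedTrinomial Q S b c).map φ = linearizedTrinomial Q S (φ b) (φ c) := by
  simp [linearizedTrinomial]

theorem isRoot_linearizedTrinomial_mul_map {Q S : ℕ} (hSQ : S ≤ Q) (hQ : 1 ≤ Q) {b c v : R}
    (hv : (linearizedTrinomial Q S b c).IsRoot v) (φ : R →+* R') (γ : R') :
    (linearizedTrinomial Q S (φ b * γ ^ (Q - S)) (φ c * γ ^ (Q - 1))).IsRoot (γ * φ v) := by
  have hφv : (linearizedTrinomial Q S (φ b) (φ c)).IsRoot (φ v) := by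
    rw [← map_linearizedTrinomial]; exact hv.map
  simp only [IsRoot, linearizedTrinomial, eval_add, eval_mul, eval_pow, eval_C, eval_X] at hφv ⊢
  linear_combination γ ^ Q * hφv + φ b * φ v ^ S * pow_sub_mul_pow γ hSQ
    + φ c * φ v * pow_sub_mul_pow γ hQ

theorem natDegree_linearizedTrinomial [Nontrivial R] {Q S : ℕ} (hSQ : S < Q) (hQ : 1 < Q)
    (b c : R) : (linearizedTrinomial Q S b c).natDegree = Q := by
  unfold linearizedTrinomial
  compute_degree!
  all_goals first | omega | simp [hSQ.ne', hQ.ne']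

theorem linearizedTrinomial_ne_zero [Nontrivial R] {Q S : ℕ} (hSQ : S < Q) (hQ : 1 < Q)
    (b c : R) : linearizedTrinomial Q S b c ≠ 0 :=
  ne_zero_of_natDegree_gt (n := 0) ((natDegree_linearizedTrinomial hSQ hQ b c).symm ▸ by omega)

theorem natDegree_linearizedTrinomial_sub_le {Q S : ℕ} (hS : 1 ≤ S) (b c b' c' : R) :
    (linearizedTrinomial Q S b c - linearizedTrinomial Q S b' c').natDegree ≤ S := by
  have : linearizedTrinomial Q S b c - linearizedTrinomial Q S b' c' =
      C (b - b') * X ^ S + C (c - c') * X := by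
    simp only [linearizedTrinomial, C_sub]; ring
  rw [this]
  compute_degree
  omega

variable [IsDomain R]

theorem ncard_le_natDegree_of_forall_isRoot {p : R[X]} (hp : p ≠ 0) {S : Set R}
    (hS : ∀ x ∈ S, p.IsRoot x) : S.ncard ≤ p.natDegree :=
  (Set.ncard_le_ncard (fun x hx => (mem_rootSet_of_ne hp).2 (hS x hx)) (p.rootSet_finite R)).trans
    (p.ncard_rootSet_le R)

theorem eq_setOf_isRoot_of_forall_isRoot {p : R[X]} (hp : p ≠ 0) {S : Set R}
    (hS : ∀ x ∈ S, p.IsRoot x) (hdeg : p.natDegree ≤ S.ncard) : S = {x | p.IsRoot x} :=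
  Set.eq_of_subset_of_ncard_le hS ((ncard_le_natDegree_of_forall_isRoot hp fun _ => id).trans hdeg)
    (finite_setOfPred_isRoot hp)

end Polynomial

theorem isRoot_subspacePoly {K F : Type*} [Field K] [Field F] [Algebra K F] [Fintype F]
    {V : Submodule K F} {v : F} (hv : v ∈ V) : (subspacePoly V).IsRoot v := by
  rw [subspacePoly, IsRoot, eval_prod]
  exact Finset.prod_eq_zero ((Set.toFinite _).mem_toFinset.2 hv) (by simp)

theorem FiniteField.iterate_frobeniusAlgHom_apply {K F : Type*} [Field K] [Fintype K] [Field F]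
    [Algebra K F] (i : ℕ) (x : F) :
    (FiniteField.frobeniusAlgHom K F)^[i] x = x ^ Fintype.card K ^ i := by
  rw [FiniteField.coe_frobeniusAlgHom, pow_iterate]

section FiniteField

variable {K F : Type*} [Field K] [Fintype K] [Field F] [Algebra K F]

local notation "q" => Fintype.card K

open Module

theorem injective_mul_pow_card_pow {γ : F} (hγ : γ ≠ 0) (i : ℕ) :
    Function.Injective fun v : F => γ * v ^ q ^ i := by
  have : (fun v : F => γ * v ^ q ^ i) =
      (γ * ·) ∘ ((FiniteField.frobeniusAlgHom K F : F →+* F) ^ i) := by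
    ext v; simp [FiniteField.iterate_frobeniusAlgHom_apply]
  rw [this]
  exact (mul_right_injective₀ hγ).comp
    ((FiniteField.frobeniusAlgHom K F : F →+* F) ^ i).injective

variable [Finite F]

theorem Submodule.ncard_eq_pow_finrank (W : Submodule K F) :
    (W : Set F).ncard = q ^ finrank K W := by
  rw [← Nat.card_eq_fintype_card, ← Module.natCard_eq_pow_finrank]
  rfl

theorem Submodule.finrank_le_of_forall_isRoot {W : Submodule K F} {p : F[X]} (hp : p ≠ 0)
    {s : ℕ} (hdeg : p.natDegree ≤ q ^ s) (hW : ∀ x ∈ W, p.IsRoot x) : finrank K W ≤ s := by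
  have hcard := ncard_le_natDegree_of_forall_isRoot hp (S := (W : Set F)) hW
  rw [W.ncard_eq_pow_finrank] at hcard
  exact (Nat.pow_le_pow_iff_right Fintype.one_lt_card).1 (hcard.trans hdeg)

theorem finrank_eq_of_coe_eq_image {V W : Submodule K F} {γ : F} (hγ : γ ≠ 0) {i : ℕ}
    (hW : (W : Set F) = (fun v => γ * v ^ q ^ i) '' V) : finrank K W = finrank K V := by
  have hcard := Set.ncard_image_of_injective (V : Set F) (injective_mul_pow_card_pow (K := K) hγ i)
  rw [← hW, W.ncard_eq_pow_finrank, V.ncard_eq_pow_finrank] at hcard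
  exact Nat.pow_right_injective (Fintype.one_lt_card (α := K)) hcard

theorem Submodule.finrank_inf_le_of_coe_eq_setOf_isRoot {W₁ W₂ : Submodule K F}
    (hne : W₁ ≠ W₂) {Q s : ℕ} {b₁ c₁ b₂ c₂ : F}
    (hW₁ : (W₁ : Set F) = {x | (linearizedTrinomial Q (q ^ s) b₁ c₁).IsRoot x})
    (hW₂ : (W₂ : Set F) = {x | (linearizedTrinomial Q (q ^ s) b₂ c₂).IsRoot x}) :
    finrank K ↥(W₁ ⊓ W₂) ≤ s := by
  have hP : linearizedTrinomial Q (q ^ s) b₁ c₁ - linearizedTrinomial Q (q ^ s) b₂ c₂ ≠ 0 :=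
    sub_ne_zero.2 fun h => hne (SetLike.coe_injective (by rw [hW₁, hW₂, h]))
  exact finrank_le_of_forall_isRoot hP
    (natDegree_linearizedTrinomial_sub_le (Nat.one_le_pow _ _ Fintype.card_pos) _ _ _ _)
    fun x hx => by rw [IsRoot.def, eval_sub, hW₁.subset hx.1, hW₂.subset hx.2, sub_zero]

variable [Fintype F]

theorem coe_eq_setOf_isRoot_of_coe_eq_image {V W : Submodule K F} {k s : ℕ} {b c : F}
    (hLV : subspacePoly V = linearizedTrinomial (q ^ k) (q ^ s) b c) (hsk : s < k)
    (hVk : finrank K V = k) {γ : F} (hγ : γ ≠ 0) {i : ℕ}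
    (hW : (W : Set F) = (fun v => γ * v ^ q ^ i) '' V) :
    (W : Set F) = {x | (linearizedTrinomial (q ^ k) (q ^ s) (b ^ q ^ i * γ ^ (q ^ k - q ^ s))
      (c ^ q ^ i * γ ^ (q ^ k - 1))).IsRoot x} := by
  have hq : 1 < q := Fintype.one_lt_card
  have hSQ : q ^ s < q ^ k := Nat.pow_lt_pow_right hq hsk
  have hQ : 1 < q ^ k := Nat.one_lt_pow (by omega) hq
  refine eq_setOf_isRoot_of_forall_isRoot (linearizedTrinomial_ne_zero hSQ hQ _ _) ?_ ?_
  · rw [hW]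
    rintro _ ⟨v, hv, rfl⟩
    simpa [FiniteField.iterate_frobeniusAlgHom_apply] using
      isRoot_linearizedTrinomial_mul_map hSQ.le hQ.le
      (hLV ▸ isRoot_subspacePoly hv) ((FiniteField.frobeniusAlgHom K F : F →+* F) ^ i) γ
  · rw [natDegree_linearizedTrinomial hSQ hQ, W.ncard_eq_pow_finrank,
      finrank_eq_of_coe_eq_image hγ hW, hVk]

end FiniteField

theorem frobenius_quasi_orbit_code_distance_general
    {K F : Type*} [Field K] [Fintype K] [Field F] [Fintype F] [Algebra K F]
    (q n m k s : ℕ) (hq : Fintype.card K = q)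
    (hsk : s < k)
    (a0 as : F)
    (V : Submodule K F) (hVk : Module.finrank K ↥V = k)
    (hLV : subspacePoly V = X ^ q ^ k + C as * X ^ q ^ s + C a0 * X) :
    ∀ W₁ ∈ {W : Submodule K F | ∃ i < n, ∃ α : F, α ≠ 0 ∧
        (W : Set F) = (fun v => α ^ m * v ^ q ^ i) '' (V : Set F)},
      ∀ W₂ ∈ {W : Submodule K F | ∃ i < n, ∃ α : F, α ≠ 0 ∧
        (W : Set F) = (fun v => α ^ m * v ^ q ^ i) '' (V : Set F)},
      W₁ ≠ W₂ →
        Module.finrank K ↥(W₁ ⊓ W₂) ≤ s ∧ 2 * (k - s) ≤ subspaceDist W₁ W₂ := by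
  subst hq
  rintro W₁ ⟨i, -, α, hα, hW₁⟩ W₂ ⟨j, -, β, hβ, hW₂⟩ hne
  have hL : subspacePoly V = linearizedTrinomial _ _ as a0 := hLV
  have hP₁ := coe_eq_setOf_isRoot_of_coe_eq_image hL hsk hVk (pow_ne_zero m hα) hW₁
  have hP₂ := coe_eq_setOf_isRoot_of_coe_eq_image hL hsk hVk (pow_ne_zero m hβ) hW₂
  have hk₁ : Module.finrank K W₁ = k := hVk ▸ finrank_eq_of_coe_eq_image (pow_ne_zero _ hα) hW₁
  have hk₂ : Module.finrank K W₂ = k := hVk ▸ finrank_eq_of_coe_eq_image (pow_ne_zero _ hβ) hW₂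
  have hdim := Submodule.finrank_inf_le_of_coe_eq_setOf_isRoot hne hP₁ hP₂
  exact ⟨hdim, by unfold subspaceDist; omega⟩

theorem frobenius_quasi_orbit_code_distance
    {K F : Type*} [Field K] [Fintype K] [Field F] [Fintype F] [Algebra K F]
    (q n t N m k s : ℕ) (hq : Fintype.card K = q)
    (hnp : n.Prime) (ht : 0 < t) (hN : N = n * t)
    (hF : Module.finrank K F = N) (hm : 0 < m) (hmdvd : m ∣ q ^ n - 1)
    (hs1 : 1 ≤ s) (hsk : s < k)
    (a0 as : F) (ha0 : a0 ≠ 0) (has : as ≠ 0)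
    (V : Submodule K F) (hVk : Module.finrank K ↥V = k)
    (hLV : subspacePoly V = X ^ q ^ k + C as * X ^ q ^ s + C a0 * X) :
    ∀ W₁ ∈ {W : Submodule K F | ∃ i < n, ∃ α : F, α ≠ 0 ∧
        (W : Set F) = (fun v => α ^ m * v ^ q ^ i) '' (V : Set F)},
      ∀ W₂ ∈ {W : Submodule K F | ∃ i < n, ∃ α : F, α ≠ 0 ∧
        (W : Set F) = (fun v => α ^ m * v ^ q ^ i) '' (V : Set F)},
      W₁ ≠ W₂ →
        Module.finrank K ↥(W₁ ⊓ W₂) ≤ s ∧ 2 * (k - s) ≤ subspaceDist W₁ W₂ :=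
  frobenius_quasi_orbit_code_distance_general q n m k s hq hsk a0 as V hVk hLV
end
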